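/- Let Π be a finite projective plane of order q ≥ 2, i.e., a (q²+q+1, q+1, 1)-design. Then γ(Π) = 2q. -/

import Mathlib

/-!
A dominating set `S` with `a` points and `c` lines covers every point either by itself or by one
of its `c` lines, and every line either by itself or by one of its `a` points; since lines have
`q + 1` points and points lie on `q + 1` lines, `q² + q + 1 ≤ a + c (q + 1)` and
`q² + q + 1 ≤ c + a (q + 1)`, which force `a + c ≥ 2q`. Conversely, for a flag `p ∈ ℓ`, the
`q` points of `ℓ` other than `p` together with the `q` lines through `p` other than `ℓ`
dominate: a point off `ℓ` is joined to `p` by a line, and a line not through `p` meets `ℓ` in a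
point other than `p`, because any two lines of a projective plane meet.
-/

open Finset

variable {α ι : Type*}

/-- The incidence (Levi) graph of the block family `B` indexed by `ι` over point set `α`:
a bipartite graph where point `p` is adjacent to block `i` iff `p ∈ B i`. -/
def incGraph (B : ι → Finset α) : SimpleGraph (α ⊕ ι) where
  Adj x y :=
    (∃ p i, x = Sum.inl p ∧ y = Sum.inr i ∧ p ∈ B i) ∨
    (∃ p i, x = Sum.inr i ∧ y = Sum.inl p ∧ p ∈ B i)
  symm := by
    constructor
    rintro x y (⟨p, i, rfl, rfl, h⟩ | ⟨p, i, rfl, rfl, h⟩)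
    · exact Or.inr ⟨p, i, rfl, rfl, h⟩
    · exact Or.inl ⟨p, i, rfl, rfl, h⟩
  loopless := by
    constructor
    rintro x (⟨p, i, rfl, h, -⟩ | ⟨p, i, rfl, h, -⟩) <;> simp at h

/-- A dominating set of vertices in a graph: every vertex not in `S` has a neighbour in `S`. -/
def IsDomSet {V : Type*} (G : SimpleGraph V) (S : Finset V) : Prop :=
  ∀ v ∉ S, ∃ s ∈ S, G.Adj v s

/-- The domination number of a graph: the minimum size of a dominating set. -/
noncomputable def domNum {V : Type*} (G : SimpleGraph V) : ℕ :=
  sInf {n | ∃ S : Finset V, IsDomSet G S ∧ S.card = n}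

lemma domNum_eq_of_isDomSet {V : Type*} {G : SimpleGraph V} {S : Finset V} {n : ℕ}
    (hS : IsDomSet G S) (hcard : #S = n) (hmin : ∀ T, IsDomSet G T → n ≤ #T) :
    domNum G = n :=
  le_antisymm (Nat.sInf_le ⟨S, hS, hcard⟩) <|
    le_csInf ⟨n, S, hS, hcard⟩ fun _ ⟨T, hT, hTn⟩ => hTn ▸ hmin T hT

section IncidenceGraph

variable {B : ι → Finset α} {p p' : α} {i i' : ι}

@[simp]
lemma incGraph_adj_inl_inr : (incGraph B).Adj (.inl p) (.inr i) ↔ p ∈ B i := by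
  simp [incGraph]

@[simp]
lemma incGraph_adj_inr_inl : (incGraph B).Adj (.inr i) (.inl p) ↔ p ∈ B i := by
  simp [incGraph]

@[simp]
lemma incGraph_not_adj_inl_inl : ¬(incGraph B).Adj (.inl p) (.inl p') := by
  simp [incGraph]

@[simp]
lemma incGraph_not_adj_inr_inr : ¬(incGraph B).Adj (.inr i) (.inr i') := by
  simp [incGraph]

def blocksThrough [Fintype ι] [DecidableEq α] (B : ι → Finset α) (x : α) : Finset ι :=
  {i | x ∈ B i}

@[simp]
lemma mem_blocksThrough [Fintype ι] [DecidableEq α] {x : α} :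
    i ∈ blocksThrough B x ↔ x ∈ B i := by
  simp [blocksThrough]

lemma IsDomSet.card_points_le [Fintype α] [DecidableEq α] {S : Finset (α ⊕ ι)}
    (hS : IsDomSet (incGraph B) S) :
    Fintype.card α ≤ #S.toLeft + ∑ i ∈ S.toRight, #(B i) := by
  have hcover : univ ⊆ S.toLeft ∪ S.toRight.biUnion B := by
    intro x _
    by_cases hx : Sum.inl x ∈ S
    · simp [hx]
    · obtain ⟨s | j, hs, hadj⟩ := hS _ hx
      · simp at hadj
      · exact mem_union_right _ (mem_biUnion.mpr ⟨j, by simpa using hs, by simpa using hadj⟩)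
  calc Fintype.card α ≤ #(S.toLeft ∪ S.toRight.biUnion B) := card_le_card hcover
    _ ≤ #S.toLeft + #(S.toRight.biUnion B) := card_union_le _ _
    _ ≤ #S.toLeft + ∑ i ∈ S.toRight, #(B i) := by gcongr; exact card_biUnion_le

lemma IsDomSet.card_blocks_le [Fintype ι] [DecidableEq α] {S : Finset (α ⊕ ι)}
    (hS : IsDomSet (incGraph B) S) :
    Fintype.card ι ≤ #S.toRight + ∑ x ∈ S.toLeft, #(blocksThrough B x) := by
  classical
  have hcover : univ ⊆ S.toRight ∪ S.toLeft.biUnion (blocksThrough B) := by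
    intro j _
    by_cases hj : Sum.inr j ∈ S
    · simp [hj]
    · obtain ⟨x | s, hs, hadj⟩ := hS _ hj
      · exact mem_union_right _ (mem_biUnion.mpr ⟨x, by simpa using hs, by simpa using hadj⟩)
      · simp at hadj
  calc Fintype.card ι
      ≤ #(S.toRight ∪ S.toLeft.biUnion (blocksThrough B)) := card_le_card hcover
    _ ≤ #S.toRight + #(S.toLeft.biUnion (blocksThrough B)) := card_union_le _ _
    _ ≤ #S.toRight + ∑ x ∈ S.toLeft, #(blocksThrough B x) := by gcongr; exact card_biUnion_le

end IncidenceGraph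

section LinearSpace

variable [Fintype ι] [DecidableEq α] {B : ι → Finset α}

lemma exists_mem_mem_of_ne
    (hpair : ∀ x y : α, x ≠ y → (univ.filter fun i => x ∈ B i ∧ y ∈ B i).card = 1)
    {x y : α} (hxy : x ≠ y) : ∃ i, x ∈ B i ∧ y ∈ B i := by
  obtain ⟨i, hi⟩ := card_pos.mp (hpair x y hxy ▸ Nat.one_pos)
  exact ⟨i, (mem_filter.mp hi).2⟩

lemma eq_of_mem_of_mem
    (hpair : ∀ x y : α, x ≠ y → (univ.filter fun i => x ∈ B i ∧ y ∈ B i).card = 1)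
    {x y : α} (hxy : x ≠ y) {i j : ι} (hxi : x ∈ B i) (hyi : y ∈ B i)
    (hxj : x ∈ B j) (hyj : y ∈ B j) : i = j :=
  card_le_one.mp (hpair x y hxy).le i (by simp [hxi, hyi]) j (by simp [hxj, hyj])

lemma exists_mem_not_mem_of_ne
    (hpair : ∀ x y : α, x ≠ y → (univ.filter fun i => x ∈ B i ∧ y ∈ B i).card = 1)
    {i j : ι} (hij : i ≠ j) (hi : 2 ≤ #(B i)) : ∃ y ∈ B i, y ∉ B j := by
  by_contra! hsub
  obtain ⟨x, hx, y, hy, hxy⟩ := one_lt_card.mp hi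
  exact hij (eq_of_mem_of_mem hpair hxy hx hy (hsub x hx) (hsub y hy))

lemma card_blocksThrough_mul [Fintype α]
    (hpair : ∀ x y : α, x ≠ y → (univ.filter fun i => x ∈ B i ∧ y ∈ B i).card = 1)
    {k : ℕ} (hk : ∀ i, #(B i) = k) (x : α) :
    #(blocksThrough B x) * (k - 1) = Fintype.card α - 1 := by
  have h := card_mul_eq_card_mul (fun i y => y ∈ B i) (s := blocksThrough B x)
    (t := univ.erase x) (m := k - 1) (n := 1)
    (fun i hi => by
      rw [bipartiteAbove, ← hk i, ← card_erase_of_mem (mem_blocksThrough.mp hi)]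
      congr 1; ext; simp [and_comm])
    (fun y hy => by
      rw [bipartiteBelow, ← hpair x y (ne_of_mem_erase hy).symm]
      congr 1; ext; simp)
  rwa [card_erase_of_mem (mem_univ x), card_univ, mul_one] at h

lemma card_mul_eq_card_mul_of_regular [Fintype α] {k r : ℕ} (hk : ∀ i, #(B i) = k)
    (hr : ∀ x, #(blocksThrough B x) = r) : Fintype.card ι * k = Fintype.card α * r := by
  have h := card_mul_eq_card_mul (fun i y => y ∈ B i) (s := univ) (t := univ) (m := k) (n := r)
    (fun i _ => by rw [← hk i, bipartiteAbove]; congr 1; ext; simp)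
    (fun x _ => by rw [← hr x, bipartiteBelow]; rfl)
  simpa using h

lemma exists_mem_mem_of_card_blocksThrough_le
    (hpair : ∀ x y : α, x ≠ y → (univ.filter fun i => x ∈ B i ∧ y ∈ B i).card = 1)
    {y : α} {l m : ι} (hr : #(blocksThrough B y) ≤ #(B l)) (hyl : y ∉ B l) (hym : y ∈ B m) :
    ∃ z ∈ B l, z ∈ B m := by
  classical
  by_contra! hdisj
  have line : ∀ z, ∃ i, y ∈ B i ∧ (z ≠ y → z ∈ B i) := fun z => by
    by_cases hz : z = y
    · exact ⟨m, hym, fun h => (h hz).elim⟩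
    · obtain ⟨i, hyi, hzi⟩ := exists_mem_mem_of_ne hpair (Ne.symm hz)
      exact ⟨i, hyi, fun _ => hzi⟩
  choose f hfy hfz using line
  have hne : ∀ z ∈ B l, z ≠ y := fun z hz h => hyl (h ▸ hz)
  -- `z ↦ f z` sends the points of `B l` to blocks through `y` other than `m`: too few of them.
  have hmaps : Set.MapsTo f (B l) ((blocksThrough B y).erase m) := fun z hz =>
    mem_erase.mpr ⟨fun h => hdisj z hz (h ▸ hfz z (hne z hz)), mem_blocksThrough.mpr (hfy z)⟩
  have hlt : #((blocksThrough B y).erase m) < #(B l) := by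
    rw [card_erase_of_mem (mem_blocksThrough.mpr hym)]
    have := card_pos.mpr ⟨m, mem_blocksThrough.mpr hym⟩
    omega
  obtain ⟨z, hz, z', hz', hzz', hf⟩ := exists_ne_map_eq_of_card_lt_of_maps_to hlt hmaps
  have hfl : f z = l := eq_of_mem_of_mem hpair hzz' (hfz z (hne z hz))
    (hf ▸ hfz z' (hne z' hz')) hz hz'
  exact hyl (hfl ▸ hfy z)

end LinearSpace

lemma two_mul_le_add_of_le_add_mul {q a c : ℕ} (hpts : q ^ 2 + q + 1 ≤ a + c * (q + 1))
    (hblocks : q ^ 2 + q + 1 ≤ c + a * (q + 1)) : 2 * q ≤ a + c := by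
  by_contra! h
  rcases lt_or_ge c q with hc | hc
  · nlinarith [Nat.mul_le_mul_right q (Nat.succ_le_of_lt hc)]
  · nlinarith [Nat.mul_le_mul_right q (Nat.succ_le_of_lt (show a < q by omega))]

structure IsProjectivePlaneOfOrder [Fintype α] [Fintype ι] [DecidableEq α]
    (B : ι → Finset α) (q : ℕ) : Prop where
  card_points : Fintype.card α = q ^ 2 + q + 1
  card_block : ∀ i, #(B i) = q + 1
  pair : ∀ x y : α, x ≠ y → (univ.filter fun i => x ∈ B i ∧ y ∈ B i).card = 1

namespace IsProjectivePlaneOfOrder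

variable [Fintype α] [Fintype ι] [DecidableEq α] {B : ι → Finset α} {q : ℕ}

lemma card_blocksThrough (hP : IsProjectivePlaneOfOrder B q) (hq : 0 < q) (x : α) :
    #(blocksThrough B x) = q + 1 := by
  have h := card_blocksThrough_mul hP.pair hP.card_block x
  rw [hP.card_points, Nat.add_sub_cancel, Nat.add_sub_cancel] at h
  exact Nat.eq_of_mul_eq_mul_right hq (by rw [h]; ring)

lemma card_blocks (hP : IsProjectivePlaneOfOrder B q) (hq : 0 < q) :
    Fintype.card ι = q ^ 2 + q + 1 := by
  have h := card_mul_eq_card_mul_of_regular hP.card_block (hP.card_blocksThrough hq)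
  rw [← hP.card_points]
  exact Nat.eq_of_mul_eq_mul_right q.succ_pos h

lemma exists_mem_mem (hP : IsProjectivePlaneOfOrder B q) (hq : 0 < q) {i j : ι} (hij : i ≠ j) :
    ∃ z ∈ B i, z ∈ B j := by
  obtain ⟨y, hyj, hyi⟩ :=
    exists_mem_not_mem_of_ne hP.pair hij.symm (by rw [hP.card_block]; omega)
  exact exists_mem_mem_of_card_blocksThrough_le hP.pair
    (by rw [hP.card_blocksThrough hq, hP.card_block]) hyi hyj

lemma two_mul_le_card_of_isDomSet (hP : IsProjectivePlaneOfOrder B q) (hq : 0 < q)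
    {S : Finset (α ⊕ ι)} (hS : IsDomSet (incGraph B) S) : 2 * q ≤ #S := by
  have hpts := hS.card_points_le
  have hblocks := hS.card_blocks_le
  simp only [hP.card_block, hP.card_blocksThrough hq, sum_const, smul_eq_mul,
    hP.card_points, hP.card_blocks hq] at hpts hblocks
  rw [← card_toLeft_add_card_toRight]
  exact two_mul_le_add_of_le_add_mul hpts (by linarith)

def flagDomSet [DecidableEq ι] (B : ι → Finset α) (p : α) (l : ι) : Finset (α ⊕ ι) :=
  ((B l).erase p).disjSum ((blocksThrough B p).erase l)

lemma isDomSet_flagDomSet [DecidableEq ι] (hP : IsProjectivePlaneOfOrder B q) (hq : 0 < q)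
    {p : α} {l : ι} (hpl : p ∈ B l) : IsDomSet (incGraph B) (flagDomSet B p l) := by
  rintro (x | m) hv <;> simp only [flagDomSet, inl_mem_disjSum, inr_mem_disjSum, mem_erase,
    not_and] at hv
  · by_cases hxp : x = p
    · subst hxp
      obtain ⟨i, hi⟩ : ((blocksThrough B x).erase l).Nonempty := by
        rw [← card_pos, card_erase_of_mem (mem_blocksThrough.mpr hpl), hP.card_blocksThrough hq]
        omega
      exact ⟨.inr i, by simpa [flagDomSet] using hi, by simpa using (mem_erase.mp hi).2⟩
    · obtain ⟨i, hxi, hpi⟩ := exists_mem_mem_of_ne hP.pair hxp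
      have hil : i ≠ l := fun h => hv hxp (h ▸ hxi)
      exact ⟨.inr i, by simp [flagDomSet, hil, hpi], by simpa using hxi⟩
  · by_cases hml : m = l
    · subst hml
      obtain ⟨z, hz⟩ : ((B m).erase p).Nonempty := by
        rw [← card_pos, card_erase_of_mem hpl, hP.card_block]
        omega
      exact ⟨.inl z, by simpa [flagDomSet] using hz, by simpa using (mem_erase.mp hz).2⟩
    · obtain ⟨z, hzm, hzl⟩ := hP.exists_mem_mem hq hml
      have hzp : z ≠ p := fun h => hv hml (mem_blocksThrough.mpr (h ▸ hzm))
      exact ⟨.inl z, by simp [flagDomSet, hzp, hzl], by simpa using hzm⟩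

lemma card_flagDomSet [DecidableEq ι] (hP : IsProjectivePlaneOfOrder B q) (hq : 0 < q)
    {p : α} {l : ι} (hpl : p ∈ B l) : #(flagDomSet B p l) = 2 * q := by
  rw [flagDomSet, card_disjSum, card_erase_of_mem hpl,
    card_erase_of_mem (mem_blocksThrough.mpr hpl), hP.card_block, hP.card_blocksThrough hq]
  omega

lemma exists_flag (hP : IsProjectivePlaneOfOrder B q) (hq : 0 < q) : ∃ p l, p ∈ B l := by
  obtain ⟨p⟩ : Nonempty α := Fintype.card_pos_iff.mp (by rw [hP.card_points]; omega)
  obtain ⟨l, hl⟩ := card_pos.mp (by rw [hP.card_blocksThrough hq p]; omega)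
  exact ⟨p, l, mem_blocksThrough.mp hl⟩

theorem domNum_incGraph (hP : IsProjectivePlaneOfOrder B q) (hq : 0 < q) :
    domNum (incGraph B) = 2 * q := by
  classical
  obtain ⟨p, l, hpl⟩ := hP.exists_flag hq
  exact domNum_eq_of_isDomSet (hP.isDomSet_flagDomSet hq hpl) (hP.card_flagDomSet hq hpl)
    fun _ hT => hP.two_mul_le_card_of_isDomSet hq hT

end IsProjectivePlaneOfOrder

/-- A finite projective plane of order `q ≥ 2`, i.e. a
`(q²+q+1, q+1, 1)`-design, has domination number exactly `2q`. -/
theorem stmt11 [Fintype α] [Fintype ι] [DecidableEq α]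
    (B : ι → Finset α) (q : ℕ) (hq : 2 ≤ q)
    (hv : Fintype.card α = q ^ 2 + q + 1)
    (hblock : ∀ i, (B i).card = q + 1)
    (hpair : ∀ x y : α, x ≠ y →
      (Finset.univ.filter fun i => x ∈ B i ∧ y ∈ B i).card = 1) :
    domNum (incGraph B) = 2 * q :=
  IsProjectivePlaneOfOrder.domNum_incGraph ⟨hv, hblock, hpair⟩ (by omega)
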